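/- The formula P → P ⊓ P is provable in CL9, while P → P ∧ P and P → P △ P are not provable in CL9, where P is a general atom. -/
import Mathlib


/-- CL9-formulas (binary versions of the connectives; negation is applied
only to atoms, i.e., formulas are in negation normal form):
`elit b i` is the elementary literal on atom `i` (negated when `b = false`),
`glit b i` is the general literal on atom `i`;
`pand`/`por` are parallel ∧/∨, `cand`/`cor` are choice ⊓/⊔,
`sand`/`sor` are sequential △/▽. -/
inductive Fml where
  | top : Fml
  | bot : Fml
  | elit : Bool → ℕ → Fml
  | glit : Bool → ℕ → Fml
  | pand : Fml → Fml → Fml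
  | por  : Fml → Fml → Fml
  | cand : Fml → Fml → Fml
  | cor  : Fml → Fml → Fml
  | sand : Fml → Fml → Fml
  | sor  : Fml → Fml → Fml
deriving DecidableEq

namespace Fml

/-- Negation, pushed to atoms via the De Morgan dualities. -/
def neg : Fml → Fml
  | top => bot
  | bot => top
  | elit b i => elit (!b) i
  | glit b i => glit (!b) i
  | pand A B => por A.neg B.neg
  | por A B => pand A.neg B.neg
  | cand A B => cor A.neg B.neg
  | cor A B => cand A.neg B.neg
  | sand A B => sor A.neg B.neg
  | sor A B => sand A.neg B.neg

/-- E → F abbreviates ¬E ∨ F. -/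
def imp (A B : Fml) : Fml := por A.neg B

/-- `SRepl G G' F H` holds iff `H` is the result of replacing in `F` one
surface occurrence of `G` (an occurrence not in the scope of a choice
connective and not in the tail of a sequential subformula) by `G'`. -/
inductive SRepl (G G' : Fml) : Fml → Fml → Prop where
  | here : SRepl G G' G G'
  | pandL {A A' B} : SRepl G G' A A' → SRepl G G' (pand A B) (pand A' B)
  | pandR {A B B'} : SRepl G G' B B' → SRepl G G' (pand A B) (pand A B')
  | porL {A A' B} : SRepl G G' A A' → SRepl G G' (por A B) (por A' B)
  | porR {A B B'} : SRepl G G' B B' → SRepl G G' (por A B) (por A B')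
  | sandL {A A' B} : SRepl G G' A A' → SRepl G G' (sand A B) (sand A' B)
  | sorL {A A' B} : SRepl G G' A A' → SRepl G G' (sor A B) (sor A' B)

/-- The elementarization of a formula: each sequential subformula is replaced
by its head (capitalization), each surface ⊓-subformula by ⊤, each surface
⊔-subformula by ⊥, and each surface general literal by ⊥. -/
def elz : Fml → Fml
  | top => top
  | bot => bot
  | elit b i => elit b i
  | glit _ _ => bot
  | pand A B => pand (elz A) (elz B)
  | por A B => por (elz A) (elz B)
  | cand _ _ => top
  | cor _ _ => bot
  | sand A _ => elz A
  | sor A _ => elz A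

/-- Classical evaluation of a formula under a truth assignment (only its
values on elementary formulas matter). -/
def eval (v : ℕ → Bool) : Fml → Bool
  | top => true
  | bot => false
  | elit b i => if b then v i else !(v i)
  | glit _ _ => false
  | pand A B => eval v A && eval v B
  | por A B => eval v A || eval v B
  | cand A B => eval v A && eval v B
  | cor A B => eval v A || eval v B
  | sand A _ => eval v A
  | sor A _ => eval v A

/-- Classical tautologyhood. -/
def Taut (F : Fml) : Prop := ∀ v : ℕ → Bool, eval v F = true

/-- A formula is stable iff its elementarization is a classical tautology. -/
def Stable (F : Fml) : Prop := Taut (elz F)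

/-- The elementary atom `q` occurs in the formula. -/
def elemOccurs (q : ℕ) : Fml → Prop
  | top => False
  | bot => False
  | elit _ i => i = q
  | glit _ _ => False
  | pand A B => elemOccurs q A ∨ elemOccurs q B
  | por A B => elemOccurs q A ∨ elemOccurs q B
  | cand A B => elemOccurs q A ∨ elemOccurs q B
  | cor A B => elemOccurs q A ∨ elemOccurs q B
  | sand A B => elemOccurs q A ∨ elemOccurs q B
  | sor A B => elemOccurs q A ∨ elemOccurs q B

end Fml

open Fml

/-- The proof system CL9, given by the rules Wait, Choose, Switch and Match. -/
inductive CL9 : Fml → Prop where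
  /-- Wait: `F` is stable, and every result of replacing a surface
  ⊓-subformula of `F` by one of its conjuncts is provable, and every result
  of replacing a surface △-subformula of `F` by its tail is provable. -/
  | wait (F : Fml) (hst : Stable F)
      (hcand₁ : ∀ A B H, SRepl (cand A B) A F H → CL9 H)
      (hcand₂ : ∀ A B H, SRepl (cand A B) B F H → CL9 H)
      (hsand : ∀ A B H, SRepl (sand A B) B F H → CL9 H) :
      CL9 F
  /-- Choose: replace a surface ⊔-subformula by one of its disjuncts. -/
  | choose {F H : Fml} (A B : Fml)
      (h : SRepl (cor A B) A F H ∨ SRepl (cor A B) B F H)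
      (hp : CL9 H) : CL9 F
  /-- Switch: replace a surface ▽-subformula by its tail. -/
  | switch {F H : Fml} (A B : Fml)
      (h : SRepl (sor A B) B F H)
      (hp : CL9 H) : CL9 F
  /-- Match: replace one positive and one negative surface occurrence of a
  general atom `P` by a fresh elementary atom `q`. -/
  | match' {F H : Fml} (F₁ : Fml) (P q : ℕ)
      (hfresh : ¬ elemOccurs q F)
      (h₁ : SRepl (glit true P) (elit true q) F F₁)
      (h₂ : SRepl (glit false P) (elit false q) F₁ H)
      (hp : CL9 H) : CL9 F

namespace Fml

/-- All surface subformulas of a formula. -/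
def surf : Fml → List Fml
  | pand A B => pand A B :: (surf A ++ surf B)
  | por A B => por A B :: (surf A ++ surf B)
  | sand A B => sand A B :: surf A
  | sor A B => sor A B :: surf A
  | F => [F]

lemma srepl_mem {G G' F H : Fml} (h : SRepl G G' F H) : G ∈ surf F := by
  induction h with
  | here =>
    cases G <;> simp [surf]
  | pandL _ ih => simp [surf]; tauto
  | pandR _ ih => simp [surf]; tauto
  | porL _ ih => simp [surf]; tauto
  | porR _ ih => simp [surf]; tauto
  | sandL _ ih => simp [surf]; tauto
  | sorL _ ih => simp [surf]; tauto

lemma srepl_glit {G G' H : Fml} {b : Bool} {n : ℕ} (h : SRepl G G' (glit b n) H) :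
    glit b n = G ∧ H = G' := by cases h; exact ⟨rfl, rfl⟩

lemma srepl_elit {G G' H : Fml} {b : Bool} {n : ℕ} (h : SRepl G G' (elit b n) H) :
    elit b n = G ∧ H = G' := by cases h; exact ⟨rfl, rfl⟩

lemma srepl_cand {G G' A B H : Fml} (h : SRepl G G' (cand A B) H) :
    cand A B = G ∧ H = G' := by cases h; exact ⟨rfl, rfl⟩

lemma srepl_por {G G' A B H : Fml} (h : SRepl G G' (por A B) H) :
    (por A B = G ∧ H = G') ∨ (∃ A', SRepl G G' A A' ∧ H = por A' B) ∨
    (∃ B', SRepl G G' B B' ∧ H = por A B') := by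
  cases h with
  | here => exact .inl ⟨rfl, rfl⟩
  | porL h => exact .inr (.inl ⟨_, h, rfl⟩)
  | porR h => exact .inr (.inr ⟨_, h, rfl⟩)

lemma srepl_pand {G G' A B H : Fml} (h : SRepl G G' (pand A B) H) :
    (pand A B = G ∧ H = G') ∨ (∃ A', SRepl G G' A A' ∧ H = pand A' B) ∨
    (∃ B', SRepl G G' B B' ∧ H = pand A B') := by
  cases h with
  | here => exact .inl ⟨rfl, rfl⟩
  | pandL h => exact .inr (.inl ⟨_, h, rfl⟩)
  | pandR h => exact .inr (.inr ⟨_, h, rfl⟩)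

lemma srepl_sand {G G' A B H : Fml} (h : SRepl G G' (sand A B) H) :
    (sand A B = G ∧ H = G') ∨ (∃ A', SRepl G G' A A' ∧ H = sand A' B) := by
  cases h with
  | here => exact .inl ⟨rfl, rfl⟩
  | sandL h => exact .inr ⟨_, h, rfl⟩

end Fml

/-- CL9 proves an elementary excluded middle. -/
lemma cl9_base (q : ℕ) : CL9 (por (elit false q) (elit true q)) := by
  apply CL9.wait
  · intro v; cases h : v q <;> simp [elz, eval, h]
  all_goals
    intro A B H h
    have := srepl_mem h
    simp [surf] at this

/-- CL9 proves ¬P ∨ P. -/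
lemma cl9_lem (i : ℕ) : CL9 (por (glit false i) (glit true i)) := by
  exact CL9.match' (por (glit false i) (elit true 0)) i 0
    (by simp [elemOccurs]) (SRepl.porR SRepl.here) (SRepl.porL SRepl.here) (cl9_base 0)

/-- Replacing a general literal by an elementary literal introduces no new
general literals on the surface. -/
lemma no_new_glit {b c b' : Bool} {n m k : ℕ} {F H : Fml}
    (h : SRepl (glit b n) (elit c m) F H) (hk : glit b' k ∈ surf H) :
    glit b' k ∈ surf F := by
  induction h with
  | here => simp [surf] at hk
  | pandL _ ih => simp [surf] at hk ⊢; tauto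
  | pandR _ ih => simp [surf] at hk ⊢; tauto
  | porL _ ih => simp [surf] at hk ⊢; tauto
  | porR _ ih => simp [surf] at hk ⊢; tauto
  | sandL _ ih => simp [surf] at hk ⊢; tauto
  | sorL _ ih => simp [surf] at hk ⊢; tauto

/-- P → P ∧ P is not provable. -/
lemma not_cl9_pand (i : ℕ) :
    ¬ CL9 (por (glit false i) (pand (glit true i) (glit true i))) := by
  intro h
  cases h with
  | wait _ hst _ _ _ => have := hst (fun _ => true); simp [elz, eval] at this
  | choose A B h hp =>
      rcases h with h | h <;> (have := srepl_mem h; simp [surf] at this)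
  | switch A B h hp => have := srepl_mem h; simp [surf] at this
  | match' F₁ P q hfresh h₁ h₂ hp =>
      have key : ∀ u : Fml, CL9 u → ∀ q' : ℕ,
          (u = por (elit false q') (pand (elit true q') (glit true i)) ∨
           u = por (elit false q') (pand (glit true i) (elit true q'))) → False := by
        intro u hu
        cases hu with
        | wait _ hst _ _ _ =>
            intro q' hq
            rcases hq with rfl | rfl <;>
              (have := hst (fun _ => true); simp [elz, eval] at this)
        | choose A B h hp =>
            intro q' hq
            rcases hq with rfl | rfl <;>
              rcases h with h | h <;> (have := srepl_mem h; simp [surf] at this)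
        | switch A B h hp =>
            intro q' hq
            rcases hq with rfl | rfl <;> (have := srepl_mem h; simp [surf] at this)
        | match' F₁' P' q'' hfresh' h₁' h₂' hp' =>
            intro q' hq
            have hmem := no_new_glit h₁' (srepl_mem h₂')
            rcases hq with rfl | rfl <;> simp [surf] at hmem
      rcases srepl_por h₁ with ⟨e, _⟩ | ⟨A', hA, rfl⟩ | ⟨B', hB, rfl⟩
      · cases e
      · obtain ⟨e, rfl⟩ := srepl_glit hA; simp at e
      · rcases srepl_pand hB with ⟨e, _⟩ | ⟨A'', hA'', rfl⟩ | ⟨B'', hB'', rfl⟩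
        · cases e
        · obtain ⟨e, rfl⟩ := srepl_glit hA''
          -- F₁ = por (glit false i) (pand (elit true q) (glit true i))
          rcases srepl_por h₂ with ⟨e₂, _⟩ | ⟨A', hA', rfl⟩ | ⟨B', hB', rfl⟩
          · cases e₂
          · obtain ⟨e₂, rfl⟩ := srepl_glit hA'
            exact key _ hp q (Or.inl rfl)
          · rcases srepl_pand hB' with ⟨e₂, _⟩ | ⟨A₃, hA₃, rfl⟩ | ⟨B₃, hB₃, rfl⟩
            · cases e₂
            · obtain ⟨e₂, rfl⟩ := srepl_elit hA₃; cases e₂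
            · obtain ⟨e₂, rfl⟩ := srepl_glit hB₃; simp at e₂
        · obtain ⟨e, rfl⟩ := srepl_glit hB''
          -- F₁ = por (glit false i) (pand (glit true i) (elit true q))
          rcases srepl_por h₂ with ⟨e₂, _⟩ | ⟨A', hA', rfl⟩ | ⟨B', hB', rfl⟩
          · cases e₂
          · obtain ⟨e₂, rfl⟩ := srepl_glit hA'
            exact key _ hp q (Or.inr rfl)
          · rcases srepl_pand hB' with ⟨e₂, _⟩ | ⟨A₃, hA₃, rfl⟩ | ⟨B₃, hB₃, rfl⟩
            · cases e₂
            · obtain ⟨e₂, rfl⟩ := srepl_glit hA₃; simp at e₂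
            · obtain ⟨e₂, rfl⟩ := srepl_elit hB₃; cases e₂

/-- por (elit false q) (glit true i) is not provable. -/
lemma not_cl9_tail (q i : ℕ) : ¬ CL9 (por (elit false q) (glit true i)) := by
  intro h
  cases h with
  | wait _ hst _ _ _ => have := hst (fun _ => true); simp [elz, eval] at this
  | choose A B h hp =>
      rcases h with h | h <;> (have := srepl_mem h; simp [surf] at this)
  | switch A B h hp => have := srepl_mem h; simp [surf] at this
  | match' F₁ P q' hfresh h₁ h₂ hp =>
      have hmem := no_new_glit h₁ (srepl_mem h₂)
      simp [surf] at hmem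

/-- P → P △ P is not provable. -/
lemma not_cl9_sand (i : ℕ) :
    ¬ CL9 (por (glit false i) (sand (glit true i) (glit true i))) := by
  intro h
  cases h with
  | wait _ hst _ _ _ => have := hst (fun _ => true); simp [elz, eval] at this
  | choose A B h hp =>
      rcases h with h | h <;> (have := srepl_mem h; simp [surf] at this)
  | switch A B h hp => have := srepl_mem h; simp [surf] at this
  | match' F₁ P q hfresh h₁ h₂ hp =>
      have key : ¬ CL9 (por (elit false q) (sand (elit true q) (glit true i))) := by
        intro hu
        cases hu with
        | wait _ hst hc₁ hc₂ hsand =>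
            exact not_cl9_tail q i
              (hsand (elit true q) (glit true i) _ (SRepl.porR SRepl.here))
        | choose A B h hp =>
            rcases h with h | h <;> (have := srepl_mem h; simp [surf] at this)
        | switch A B h hp => have := srepl_mem h; simp [surf] at this
        | match' F₁' P' q' hfresh' h₁' h₂' hp' =>
            have := srepl_mem h₁'; simp [surf] at this
      rcases srepl_por h₁ with ⟨e, _⟩ | ⟨A', hA, rfl⟩ | ⟨B', hB, rfl⟩
      · cases e
      · obtain ⟨e, rfl⟩ := srepl_glit hA; simp at e
      · rcases srepl_sand hB with ⟨e, _⟩ | ⟨A'', hA'', rfl⟩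
        · cases e
        · obtain ⟨e, rfl⟩ := srepl_glit hA''
          -- F₁ = por (glit false i) (sand (elit true q) (glit true i))
          rcases srepl_por h₂ with ⟨e₂, _⟩ | ⟨A', hA', rfl⟩ | ⟨B', hB', rfl⟩
          · cases e₂
          · obtain ⟨e₂, rfl⟩ := srepl_glit hA'
            exact key hp
          · rcases srepl_sand hB' with ⟨e₂, _⟩ | ⟨A₃, hA₃, rfl⟩
            · cases e₂
            · obtain ⟨e₂, rfl⟩ := srepl_elit hA₃; cases e₂

/-- CL9 proves P → P ⊓ P, but proves neither P → P ∧ P nor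
P → P △ P, for a general atom P. -/
theorem stmt9 (i : ℕ) :
    CL9 (Fml.imp (Fml.glit true i)
          (Fml.cand (Fml.glit true i) (Fml.glit true i))) ∧
    ¬ CL9 (Fml.imp (Fml.glit true i)
          (Fml.pand (Fml.glit true i) (Fml.glit true i))) ∧
    ¬ CL9 (Fml.imp (Fml.glit true i)
          (Fml.sand (Fml.glit true i) (Fml.glit true i))) := by
  refine ⟨?_, not_cl9_pand i, not_cl9_sand i⟩
  show CL9 (por (glit false i) (cand (glit true i) (glit true i)))
  apply CL9.wait
  · intro v; simp [elz, eval]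
  · intro A B H h
    rcases srepl_por h with ⟨e, _⟩ | ⟨A', hA, rfl⟩ | ⟨B', hB, rfl⟩
    · cases e
    · obtain ⟨e, rfl⟩ := srepl_glit hA; cases e
    · obtain ⟨e, e2⟩ := srepl_cand hB
      injection e with e₁ e₂
      subst e2
      rw [← e₁]; exact cl9_lem i
  · intro A B H h
    rcases srepl_por h with ⟨e, _⟩ | ⟨A', hA, rfl⟩ | ⟨B', hB, rfl⟩
    · cases e
    · obtain ⟨e, rfl⟩ := srepl_glit hA; cases e
    · obtain ⟨e, e2⟩ := srepl_cand hB
      injection e with e₁ e₂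
      subst e2
      rw [← e₂]; exact cl9_lem i
  · intro A B H h
    have := srepl_mem h; simp [surf] at this
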